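/- Let |q| > 1, ρ > 0, and f = Σ_k c_k x^k a polynomial. Then (|q|^{−2}; |q|^{−2})_∞^{n/2} · Σ_k |c_k| ρ^{|k|} ≤ Σ_k |c_k| ([k]_{|q|^{−2}}!/[|k|]_{|q|^{−2}}!)^{1/2} ρ^{|k|} ≤ Σ_k |c_k| ρ^{|k|}. -/

import Mathlib

/-!
Write `s = |q|⁻² ∈ [0, 1)`. Clearing the denominators `1 - s` of the `q`-integers gives
`[m]_s! (1 - s)^m = (s;s)_m`, hence `[k]_s! / [|k|]_s! = ∏ᵢ (s;s)_{kᵢ} / (s;s)_{|k|}`. As `(s;s)_m`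
decreases from `1` to `(s;s)_∞`, this ratio is at least `(s;s)_∞ⁿ`. It is at most `1` because
`[a]_s! [b]_s! ≤ [a + b]_s!`, comparing `[i]_s ≤ [a + i]_s` factor by factor. Both inequalities
then hold termwise in the sums over `k`.
-/

open Finset

/-- `[m]_q = 1 + q + ⋯ + q^(m-1)`. -/
noncomputable def qNum (s : ℝ) (m : ℕ) : ℝ := ∑ i ∈ Finset.range m, s ^ i

/-- `[m]_q! = [1]_q ⋯ [m]_q`, with `[0]_q! = 1`. -/
noncomputable def qFact (s : ℝ) (m : ℕ) : ℝ := ∏ i ∈ Finset.range m, qNum s (i + 1)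

/-- `[k]_q! = [k₁]_q! ⋯ [kₙ]_q!` for a multi-index `k`. -/
noncomputable def qFactM {n : ℕ} (s : ℝ) (k : Fin n → ℕ) : ℝ := ∏ i, qFact s (k i)

/-- `(s;s)_m`. -/
noncomputable def qPochhammer (s : ℝ) (m : ℕ) : ℝ := ∏ j ∈ range m, (1 - s ^ (j + 1))

section QFactorial

variable {s : ℝ}

lemma qNum_pos (hs : 0 ≤ s) {m : ℕ} (hm : 0 < m) : 0 < qNum s m :=
  one_pos.trans_le <| by
    simpa [qNum] using single_le_sum (fun i _ => pow_nonneg hs i) (mem_range.mpr hm)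

lemma qNum_mono (hs : 0 ≤ s) : Monotone (qNum s) := fun _ _ h =>
  sum_le_sum_of_subset_of_nonneg (range_subset_range.mpr h) fun i _ _ => pow_nonneg hs i

lemma qFact_pos (hs : 0 ≤ s) (m : ℕ) : 0 < qFact s m :=
  prod_pos fun i _ => qNum_pos hs i.succ_pos

lemma qFact_mul_qFact_le (hs : 0 ≤ s) (a b : ℕ) : qFact s a * qFact s b ≤ qFact s (a + b) := by
  have hnum (i : ℕ) : 0 ≤ qNum s (i + 1) := (qNum_pos hs i.succ_pos).le
  rw [qFact, qFact, qFact, prod_range_add]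
  exact mul_le_mul_of_nonneg_left
    (prod_le_prod (fun i _ => hnum i) fun i _ => qNum_mono hs (by omega))
    (prod_nonneg fun i _ => hnum i)

lemma prod_qFact_le_qFact_sum {ι : Type*} (hs : 0 ≤ s) (t : Finset ι) (k : ι → ℕ) :
    ∏ i ∈ t, qFact s (k i) ≤ qFact s (∑ i ∈ t, k i) := by
  induction t using Finset.cons_induction with
  | empty => simp [qFact]
  | cons a t ha ih =>
    rw [prod_cons, sum_cons]
    calc qFact s (k a) * ∏ i ∈ t, qFact s (k i)
        ≤ qFact s (k a) * qFact s (∑ i ∈ t, k i) := by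
          gcongr
          exact (qFact_pos hs _).le
      _ ≤ qFact s (k a + ∑ i ∈ t, k i) := qFact_mul_qFact_le hs _ _

lemma qFact_mul_one_sub_pow (s : ℝ) (m : ℕ) : qFact s m * (1 - s) ^ m = qPochhammer s m := by
  simp [qFact, qPochhammer, qNum, ← geom_sum_mul_neg, prod_mul_distrib]

lemma qFactM_div_qFact_eq {n : ℕ} (hs : s ≠ 1) (k : Fin n → ℕ) :
    qFactM s k / qFact s (∑ i, k i) = (∏ i, qPochhammer s (k i)) / qPochhammer s (∑ i, k i) := by
  simp only [← qFact_mul_one_sub_pow, prod_mul_distrib, prod_pow_eq_pow_sum, qFactM]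
  exact (mul_div_mul_right _ _ (pow_ne_zero _ (sub_ne_zero.mpr hs.symm))).symm

lemma qFactM_div_qFact_le_one {n : ℕ} (hs : 0 ≤ s) (k : Fin n → ℕ) :
    qFactM s k / qFact s (∑ i, k i) ≤ 1 :=
  (div_le_one (qFact_pos hs _)).mpr (prod_qFact_le_qFact_sum hs univ k)

end QFactorial

section QPochhammer

variable {s : ℝ}

lemma qPochhammer_pos (hs0 : 0 ≤ s) (hs1 : s < 1) (m : ℕ) : 0 < qPochhammer s m :=
  prod_pos fun j _ => sub_pos.mpr (pow_lt_one₀ hs0 hs1 j.succ_ne_zero)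

lemma qPochhammer_le_one (hs0 : 0 ≤ s) (hs1 : s ≤ 1) (m : ℕ) : qPochhammer s m ≤ 1 :=
  prod_le_one (fun _ _ => sub_nonneg.mpr (pow_le_one₀ hs0 hs1))
    fun _ _ => sub_le_self _ (pow_nonneg hs0 _)

lemma qPochhammer_antitone (hs0 : 0 ≤ s) (hs1 : s ≤ 1) : Antitone (qPochhammer s) :=
  antitone_nat_of_succ_le fun m => by
    rw [qPochhammer, prod_range_succ]
    exact mul_le_of_le_one_right (prod_nonneg fun j _ => sub_nonneg.mpr (pow_le_one₀ hs0 hs1))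
      (sub_le_self _ (pow_nonneg hs0 _))

lemma multipliable_one_sub_pow_succ (hs0 : 0 ≤ s) (hs1 : s < 1) :
    Multipliable fun j : ℕ => 1 - s ^ (j + 1) := by
  simpa [sub_eq_add_neg] using Real.multipliable_one_add_of_summable
    ((summable_nat_add_iff 1).mpr (summable_geometric_of_lt_one hs0 hs1)).neg

lemma tprod_le_qPochhammer (hs0 : 0 ≤ s) (hs1 : s < 1) (m : ℕ) :
    ∏' j : ℕ, (1 - s ^ (j + 1)) ≤ qPochhammer s m :=
  (qPochhammer_antitone hs0 hs1.le).le_of_tendsto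
    (multipliable_one_sub_pow_succ hs0 hs1).tendsto_prod_tprod_nat m

lemma tprod_pow_le_qFactM_div_qFact {n : ℕ} (hs0 : 0 ≤ s) (hs1 : s < 1) (k : Fin n → ℕ) :
    (∏' j : ℕ, (1 - s ^ (j + 1))) ^ n ≤ qFactM s k / qFact s (∑ i, k i) := by
  have hP : 0 ≤ ∏' j : ℕ, (1 - s ^ (j + 1)) :=
    tprod_nonneg fun j => sub_nonneg.mpr (pow_le_one₀ hs0 hs1.le)
  calc (∏' j : ℕ, (1 - s ^ (j + 1))) ^ n
      = ∏ _i : Fin n, ∏' j : ℕ, (1 - s ^ (j + 1)) := by simp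
    _ ≤ ∏ i, qPochhammer s (k i) :=
        prod_le_prod (fun _ _ => hP) fun i _ => tprod_le_qPochhammer hs0 hs1 (k i)
    _ ≤ (∏ i, qPochhammer s (k i)) / qPochhammer s (∑ i, k i) :=
        le_div_self (prod_nonneg fun i _ => (qPochhammer_pos hs0 hs1 _).le)
          (qPochhammer_pos hs0 hs1 _) (qPochhammer_le_one hs0 hs1.le _)
    _ = qFactM s k / qFact s (∑ i, k i) := (qFactM_div_qFact_eq hs1.ne k).symm

end QPochhammer

/-- For `|q| > 1`, `ρ > 0` and a polynomial `f = Σ_k c_k x^k` (finitely supported `c`), with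
`s = |q|⁻²`:
`(s;s)_∞^(n/2) Σ_k |c_k| ρ^|k| ≤ Σ_k |c_k| ([k]_s!/[|k|]_s!)^(1/2) ρ^|k| ≤ Σ_k |c_k| ρ^|k|`. -/
theorem stmt15 {n : ℕ} (q : ℂ) (hq : 1 < ‖q‖) (ρ : ℝ) (hρ : 0 < ρ)
    (c : (Fin n → ℕ) →₀ ℂ) :
    Real.sqrt ((∏' j : ℕ, (1 - ((‖q‖)⁻¹ ^ 2) ^ (j + 1))) ^ n) *
        ∑ k ∈ c.support, ‖c k‖ * ρ ^ (∑ i, k i) ≤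
      (∑ k ∈ c.support, ‖c k‖ *
        Real.sqrt (qFactM ((‖q‖)⁻¹ ^ 2) k /
          qFact ((‖q‖)⁻¹ ^ 2) (∑ i, k i)) * ρ ^ (∑ i, k i)) ∧
      (∑ k ∈ c.support, ‖c k‖ *
        Real.sqrt (qFactM ((‖q‖)⁻¹ ^ 2) k /
          qFact ((‖q‖)⁻¹ ^ 2) (∑ i, k i)) * ρ ^ (∑ i, k i)) ≤
      ∑ k ∈ c.support, ‖c k‖ * ρ ^ (∑ i, k i) := by
  set s : ℝ := (‖q‖)⁻¹ ^ 2
  have hs0 : 0 ≤ s := by positivity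
  have hs1 : s < 1 := pow_lt_one₀ (by positivity) (inv_lt_one_of_one_lt₀ hq) two_ne_zero
  constructor
  · rw [mul_sum]
    refine sum_le_sum fun k _ => ?_
    have hsqrt := Real.sqrt_le_sqrt (tprod_pow_le_qFactM_div_qFact hs0 hs1 k)
    calc _ = ‖c k‖ * √((∏' j : ℕ, (1 - s ^ (j + 1))) ^ n) * ρ ^ (∑ i, k i) := by ring
      _ ≤ _ := by gcongr
  · refine sum_le_sum fun k _ => mul_le_mul_of_nonneg_right ?_ (by positivity)
    exact mul_le_of_le_one_right (norm_nonneg _)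
      (Real.sqrt_le_one.mpr (qFactM_div_qFact_le_one hs0 k))
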